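/- In the binary-sensing model, the mean squared error of each coefficient estimate satisfies E[|α̂_j − α_j|²] ≤ (c²/n) ∫_D |φ_j(x)|² / p_X(x) dx for every j. -/

import Mathlib

open MeasureTheory ProbabilityTheory Filter
open scoped ENNReal Topology

noncomputable section

/-- Sign function: `+1` if `u > 0` and `-1` otherwise. -/
def sgn' (u : ℝ) : ℝ := if 0 < u then 1 else -1

/-- Binary-quantized observation of sensor `i`: `B i = sgn (f (X i) + Z i - T i)`. -/
def obsB {E Ω : Type*} (f : E → ℝ) (X : ℕ → Ω → E) (Z T : ℕ → Ω → ℝ)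
    (i : ℕ) (ω : Ω) : ℝ :=
  sgn' (f (X i ω) + Z i ω - T i ω)

/-- Estimate of the `j`-th coefficient from the first `n` sensors:
`α̂_j = (c/n) ∑_{i<n} (φ_j(X_i))^* / p_X(X_i) * B_i`. -/
def alphaHat {E Ω : Type*} (c : ℝ) (pX : E → ℝ) (φ : ℕ → E → ℂ) (f : E → ℝ)
    (X : ℕ → Ω → E) (Z T : ℕ → Ω → ℝ) (n j : ℕ) (ω : Ω) : ℂ :=
  ((c : ℂ) / (n : ℂ)) * ∑ i ∈ Finset.range n,
    (starRingEnd ℂ) (φ j (X i ω)) / (pX (X i ω) : ℂ) * (obsB f X Z T i ω : ℂ)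

/-- The `j`-th coefficient of the field `f`: `α_j = ⟨f, φ_j⟩ = ∫_D f (φ_j)^*`. -/
def coeff {E : Type*} [MeasureSpace E] (D : Set E) (f : E → ℝ) (φ : ℕ → E → ℂ)
    (j : ℕ) : ℂ :=
  ∫ x in D, (f x : ℂ) * (starRingEnd ℂ) (φ j x)

/-- The `m`-term field estimate `f̂_{n,m} = ∑_{j<m} α̂_j φ_j`. -/
def fieldEst {E Ω : Type*} (c : ℝ) (pX : E → ℝ) (φ : ℕ → E → ℂ) (f : E → ℝ)
    (X : ℕ → Ω → E) (Z T : ℕ → Ω → ℝ) (n m : ℕ) (x : E) (ω : Ω) : ℂ :=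
  ∑ j ∈ Finset.range m, alphaHat c pX φ f X Z T n j ω * φ j x

/-- The `m`-term approximation `f_m = ∑_{j<m} α_j φ_j`. -/
def mApprox {E : Type*} [MeasureSpace E] (D : Set E) (f : E → ℝ) (φ : ℕ → E → ℂ)
    (m : ℕ) (x : E) : ℂ :=
  ∑ j ∈ Finset.range m, coeff D f φ j * φ j x

/-- The integrated mean squared error `E[‖f - f̂_{n,m}‖²]`. -/
def intMSE {E Ω : Type*} [MeasureSpace E] [MeasurableSpace Ω] (P : Measure Ω)
    (D : Set E) (c : ℝ) (pX : E → ℝ) (φ : ℕ → E → ℂ) (f : E → ℝ)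
    (X : ℕ → Ω → E) (Z T : ℕ → Ω → ℝ) (n m : ℕ) : ℝ :=
  ∫ ω, (∫ x in D, ‖(f x : ℂ) - fieldEst c pX φ f X Z T n m x ω‖ ^ 2) ∂P

/-- The `m`-term approximation error `ε[f,m] = ∑_{j≥m} |α_j|²`. -/
def tailErr {E : Type*} [MeasureSpace E] (D : Set E) (f : E → ℝ) (φ : ℕ → E → ℂ)
    (m : ℕ) : ℝ :=
  ∑' j : ℕ, ‖coeff D f φ (m + j)‖ ^ 2

/-- The deployment distribution: density `p_X` (w.r.t. Lebesgue measure) on `D`. -/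
def deployLaw {E : Type*} [MeasureSpace E] (D : Set E) (pX : E → ℝ) : Measure E :=
  (volume.restrict D).withDensity fun x => ENNReal.ofReal (pX x)

/-- The threshold distribution: uniform on `[-c, c]`. -/
def threshLaw (c : ℝ) : Measure ℝ :=
  (ENNReal.ofReal (1 / (2 * c))) • volume.restrict (Set.Icc (-c) c)

end

/-! Write `α̂_j` as the sample mean of the i.i.d. terms
`Y_i = c φ_j(X_i)^* / p_X(X_i) · B_i`. The uniform dither makes `B_i` an unbiased one-bit
quantizer: `E[sgn(u - T)] = u / c` for `|u| ≤ c`, and since `|f| + |Z| ≤ a + b = c` and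
`E Z = 0`, averaging over noise and threshold gives `E[B_i | X_i] = f(X_i) / c`, whence
`E Y_i = ∫_D f φ_j^* = α_j`. As `|B_i| = 1`, `E|Y_i|² = c² ∫_D |φ_j|² / p_X`, and the mean
squared error of the mean of `n` independent copies is their variance over `n`, at most
`E|Y_i|² / n`. -/

section SecondMoments
variable {Ω : Type*} [MeasurableSpace Ω] {P : Measure Ω}

lemma ProbabilityTheory.iIndepFun.variance_clm_apply_sum {ι E : Type*} [NormedAddCommGroup E]
    [NormedSpace ℝ E] [MeasurableSpace E] [BorelSpace E] (L : E →L[ℝ] ℝ) {Y : ι → Ω → E}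
    (hind : iIndepFun Y P) (hY : ∀ i, MemLp (Y i) 2 P) (s : Finset ι) :
    Var[fun ω => L (∑ i ∈ s, Y i ω); P] = ∑ i ∈ s, Var[fun ω => L (Y i ω); P] := by
  have hsum : (fun ω => L (∑ i ∈ s, Y i ω)) = ∑ i ∈ s, fun ω => L (Y i ω) := by
    ext ω; simp only [map_sum, Finset.sum_apply]
  rw [hsum]
  exact IndepFun.variance_sum (fun i _ => L.comp_memLp' (hY i))
    fun i _ j _ hij => (hind.comp (fun _ => L) fun _ => L.measurable).indepFun hij

variable [IsProbabilityMeasure P] {Y : Ω → ℂ}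

lemma integral_norm_sq_sub_integral_eq_variance_re_add_variance_im (hY : MemLp Y 2 P) :
    ∫ ω, ‖Y ω - ∫ ω', Y ω' ∂P‖ ^ 2 ∂P
      = Var[fun ω => (Y ω).re; P] + Var[fun ω => (Y ω).im; P] := by
  have hre : MemLp (fun ω => (Y ω).re) 2 P := hY.re
  have him : MemLp (fun ω => (Y ω).im) 2 P := hY.im
  have hre' : Integrable (fun ω => ((Y ω).re - ∫ ω', (Y ω').re ∂P) ^ 2) P :=
    (hre.sub (memLp_const _)).integrable_sq
  have him' : Integrable (fun ω => ((Y ω).im - ∫ ω', (Y ω').im ∂P) ^ 2) P :=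
    (him.sub (memLp_const _)).integrable_sq
  rw [variance_eq_integral hre.aestronglyMeasurable.aemeasurable,
    variance_eq_integral him.aestronglyMeasurable.aemeasurable, ← integral_add hre' him']
  have hmean_re : (∫ ω', Y ω' ∂P).re = ∫ ω', (Y ω').re ∂P :=
    (integral_re (hY.integrable one_le_two)).symm
  have hmean_im : (∫ ω', Y ω' ∂P).im = ∫ ω', (Y ω').im ∂P :=
    (integral_im (hY.integrable one_le_two)).symm
  refine integral_congr_ae (.of_forall fun ω => ?_)
  dsimp only
  rw [Complex.sq_norm, Complex.normSq_apply, Complex.sub_re, Complex.sub_im, hmean_re,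
    hmean_im]
  ring

lemma variance_re_add_variance_im_le (hY : MemLp Y 2 P) :
    Var[fun ω => (Y ω).re; P] + Var[fun ω => (Y ω).im; P] ≤ ∫ ω, ‖Y ω‖ ^ 2 ∂P := by
  have hre : MemLp (fun ω => (Y ω).re) 2 P := hY.re
  have him : MemLp (fun ω => (Y ω).im) 2 P := hY.im
  have hnorm : ∫ ω, ‖Y ω‖ ^ 2 ∂P = ∫ ω, (Y ω).re ^ 2 ∂P + ∫ ω, (Y ω).im ^ 2 ∂P := by
    rw [← integral_add hre.integrable_sq him.integrable_sq]
    refine integral_congr_ae (.of_forall fun ω => ?_)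
    simp only [Complex.sq_norm, Complex.normSq_apply]
    ring
  rw [hnorm]
  exact add_le_add (variance_le_expectation_sq hre.aestronglyMeasurable)
    (variance_le_expectation_sq him.aestronglyMeasurable)

lemma ProbabilityTheory.iIndepFun.integral_norm_sq_sum_sub_le {ι : Type*} {Y : ι → Ω → ℂ}
    (hind : iIndepFun Y P) (hY : ∀ i, MemLp (Y i) 2 P) (s : Finset ι) :
    ∫ ω, ‖∑ i ∈ s, Y i ω - ∑ i ∈ s, ∫ ω', Y i ω' ∂P‖ ^ 2 ∂P
      ≤ ∑ i ∈ s, ∫ ω, ‖Y i ω‖ ^ 2 ∂P := by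
  have hS : MemLp (fun ω => ∑ i ∈ s, Y i ω) 2 P := memLp_finsetSum s fun i _ => hY i
  have hre := hind.variance_clm_apply_sum Complex.reCLM hY s
  have him := hind.variance_clm_apply_sum Complex.imCLM hY s
  simp only [Complex.reCLM_apply, Complex.imCLM_apply] at hre him
  rw [← integral_finsetSum s fun i _ => (hY i).integrable one_le_two,
    integral_norm_sq_sub_integral_eq_variance_re_add_variance_im hS, hre, him,
    ← Finset.sum_add_distrib]
  exact Finset.sum_le_sum fun i _ => variance_re_add_variance_im_le (hY i)

lemma integral_norm_sq_sampleMean_sub_le {β : Type*} [MeasurableSpace β] {μ : Measure β}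
    {W : ℕ → Ω → β} (hW : ∀ i, Measurable (W i)) (hind : iIndepFun W P)
    (hlaw : ∀ i, P.map (W i) = μ) {g : β → ℂ} (hg : Measurable g) (hg2 : MemLp g 2 μ)
    {n : ℕ} (hn : 0 < n) :
    ∫ ω, ‖(n : ℂ)⁻¹ * ∑ i ∈ Finset.range n, g (W i ω) - ∫ q, g q ∂μ‖ ^ 2 ∂P
      ≤ (∫ q, ‖g q‖ ^ 2 ∂μ) / n := by
  have hY : ∀ i, MemLp (fun ω => g (W i ω)) 2 P := fun i =>
    (memLp_map_measure_iff hg.aestronglyMeasurable (hW i).aemeasurable).1 (by rwa [hlaw i])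
  have hmean : ∀ i, ∫ ω, g (W i ω) ∂P = ∫ q, g q ∂μ := fun i => by
    rw [← hlaw i, integral_map_of_stronglyMeasurable (hW i) hg.stronglyMeasurable]
  have hsq : ∀ i, ∫ ω, ‖g (W i ω)‖ ^ 2 ∂P = ∫ q, ‖g q‖ ^ 2 ∂μ := fun i => by
    rw [← hlaw i, integral_map_of_stronglyMeasurable (hW i)
      (hg.norm.pow_const 2).stronglyMeasurable]
  have hsum := (hind.comp (fun _ => g) fun _ => hg).integral_norm_sq_sum_sub_le hY
    (Finset.range n)
  simp only [Function.comp_apply, hmean, hsq, Finset.sum_const, Finset.card_range,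
    nsmul_eq_mul] at hsum
  have hn' : (n : ℂ) ≠ 0 := Nat.cast_ne_zero.2 hn.ne'
  have hscale : ∀ ω, ‖(n : ℂ)⁻¹ * ∑ i ∈ Finset.range n, g (W i ω) - ∫ q, g q ∂μ‖ ^ 2
      = ((n : ℝ) ^ 2)⁻¹ * ‖∑ i ∈ Finset.range n, g (W i ω) - n * ∫ q, g q ∂μ‖ ^ 2 := by
    intro ω
    rw [← inv_mul_cancel_left₀ hn' (∫ q, g q ∂μ), ← mul_sub, norm_mul, mul_pow, norm_inv,
      Complex.norm_natCast, inv_pow, inv_mul_cancel_left₀ hn']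
  calc _ = ((n : ℝ) ^ 2)⁻¹
          * ∫ ω, ‖∑ i ∈ Finset.range n, g (W i ω) - n * ∫ q, g q ∂μ‖ ^ 2 ∂P := by
        simp only [hscale, integral_const_mul]
    _ ≤ ((n : ℝ) ^ 2)⁻¹ * (n * ∫ q, ‖g q‖ ^ 2 ∂μ) := by gcongr
    _ = (∫ q, ‖g q‖ ^ 2 ∂μ) / n := by field_simp

end SecondMoments

lemma measurable_sgn' : Measurable sgn' :=
  Measurable.ite (measurableSet_lt measurable_const measurable_id) measurable_const
    measurable_const

lemma abs_sgn' (u : ℝ) : |sgn' u| = 1 := by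
  unfold sgn'; split <;> norm_num

lemma Measurable.integrable_sgn'_comp {α : Type*} [MeasurableSpace α] {μ : Measure α}
    [IsFiniteMeasure μ] {h : α → ℝ} (hh : Measurable h) :
    Integrable (fun x => sgn' (h x)) μ :=
  .of_bound (measurable_sgn'.comp hh).aestronglyMeasurable 1
    (.of_forall fun x => by rw [Real.norm_eq_abs, abs_sgn'])

instance {c : ℝ} : IsFiniteMeasure (threshLaw c) := by
  constructor
  rw [threshLaw, Measure.smul_apply, smul_eq_mul]
  exact ENNReal.mul_lt_top ENNReal.ofReal_lt_top (measure_lt_top _ _)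

lemma isProbabilityMeasure_threshLaw {c : ℝ} (hc : 0 < c) :
    IsProbabilityMeasure (threshLaw c) := by
  constructor
  rw [threshLaw, Measure.smul_apply, Measure.restrict_apply_univ, Real.volume_Icc,
    smul_eq_mul, ← ENNReal.ofReal_mul (by positivity), ← ENNReal.ofReal_one]
  congr 1
  field_simp
  ring

lemma setIntegral_Icc_sgn'_sub {c u : ℝ} (hu : u ∈ Set.Icc (-c) c) :
    ∫ t in Set.Icc (-c) c, sgn' (u - t) = 2 * u := by
  have hmeas : Measurable fun t => u - t := measurable_const.sub measurable_id
  have hdisj : Disjoint (Set.Ico (-c) u) (Set.Icc u c) :=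
    Set.disjoint_left.2 fun t ht ht' => (not_le.2 ht.2) ht'.1
  rw [← Set.Ico_union_Icc_eq_Icc hu.1 hu.2, setIntegral_union hdisj measurableSet_Icc
      hmeas.integrable_sgn'_comp hmeas.integrable_sgn'_comp,
    setIntegral_congr_fun (f := fun t => sgn' (u - t)) measurableSet_Ico
      (g := fun _ => (1 : ℝ)) fun t ht => if_pos (sub_pos.2 ht.2),
    setIntegral_congr_fun (f := fun t => sgn' (u - t)) measurableSet_Icc
      (g := fun _ => (-1 : ℝ)) fun t ht => if_neg (not_lt.2 (sub_nonpos.2 ht.1))]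
  simp only [setIntegral_const, measureReal_def, Real.volume_Ico, Real.volume_Icc,
    ENNReal.toReal_ofReal (sub_nonneg.2 hu.1), ENNReal.toReal_ofReal (sub_nonneg.2 hu.2),
    smul_eq_mul]
  ring

lemma integral_sgn'_sub_threshLaw {c u : ℝ} (hc : 0 < c) (hu : u ∈ Set.Icc (-c) c) :
    ∫ t, sgn' (u - t) ∂(threshLaw c) = u / c := by
  rw [threshLaw, integral_smul_measure, setIntegral_Icc_sgn'_sub hu,
    ENNReal.toReal_ofReal (by positivity), smul_eq_mul]
  field_simp

lemma integral_sgn'_add_sub_prod_threshLaw {a b c s : ℝ} (hb : 0 < b) (hc : c = a + b)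
    {μZ : Measure ℝ} [IsProbabilityMeasure μZ] (hZmean : ∫ z, z ∂μZ = 0)
    (hZsupp : μZ (Set.Icc (-b) b)ᶜ = 0) (hs : s ∈ Set.Icc (-a) a) :
    ∫ w : ℝ × ℝ, sgn' (s + w.1 - w.2) ∂(μZ.prod (threshLaw c)) = s / c := by
  have hc0 : 0 < c := by linarith [hs.1, hs.2]
  have := isProbabilityMeasure_threshLaw hc0
  have hZae : ∀ᵐ z ∂μZ, z ∈ Set.Icc (-b) b := ae_iff.2 hZsupp
  have hZint : Integrable (fun z : ℝ => z) μZ :=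
    .of_bound measurable_id.aestronglyMeasurable b
      (hZae.mono fun z hz => by rw [Real.norm_eq_abs, abs_le]; exact hz)
  have hmeas : Measurable fun w : ℝ × ℝ => s + w.1 - w.2 := by fun_prop
  calc ∫ w : ℝ × ℝ, sgn' (s + w.1 - w.2) ∂(μZ.prod (threshLaw c))
      = ∫ z, (s + z) / c ∂μZ := by
        rw [integral_prod _ hmeas.integrable_sgn'_comp]
        refine integral_congr_ae (hZae.mono fun z hz => ?_)
        exact integral_sgn'_sub_threshLaw (u := s + z) hc0
          ⟨by linarith [hs.1, hz.1], by linarith [hs.2, hz.2]⟩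
    _ = s / c := by
        rw [integral_div, integral_add (integrable_const s) hZint, integral_const, hZmean]
        simp

section DeployLaw

variable {E : Type*} [MeasureSpace E] {D : Set E} {pX : E → ℝ}

lemma isProbabilityMeasure_deployLaw (hD : MeasurableSet D) (hpX : ∀ x ∈ D, 0 ≤ pX x)
    (hpXone : ∫ x in D, pX x = 1) : IsProbabilityMeasure (deployLaw D pX) := by
  have hint : Integrable pX (volume.restrict D) := by
    by_contra h
    rw [integral_undef h] at hpXone
    exact zero_ne_one hpXone
  constructor
  rw [deployLaw, withDensity_apply _ MeasurableSet.univ, Measure.restrict_univ,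
    ← ofReal_integral_eq_lintegral_ofReal hint (ae_restrict_of_forall_mem hD hpX), hpXone,
    ENNReal.ofReal_one]

instance [SFinite (volume : Measure E)] : SFinite (deployLaw D pX) := by
  unfold deployLaw; infer_instance

variable {G : Type*} [NormedAddCommGroup G] [NormedSpace ℝ G]

lemma toReal_ofReal_ae_eq_restrict (hD : MeasurableSet D) (hpX : ∀ x ∈ D, 0 ≤ pX x) :
    ∀ᵐ x ∂(volume.restrict D), (ENNReal.ofReal (pX x)).toReal = pX x :=
  ae_restrict_of_forall_mem hD fun x hx => ENNReal.toReal_ofReal (hpX x hx)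

lemma integral_deployLaw (hD : MeasurableSet D) (hpXmeas : Measurable pX)
    (hpX : ∀ x ∈ D, 0 ≤ pX x) (F : E → G) :
    ∫ x, F x ∂(deployLaw D pX) = ∫ x in D, pX x • F x := by
  rw [deployLaw, integral_withDensity_eq_integral_toReal_smul hpXmeas.ennreal_ofReal
    (.of_forall fun _ => ENNReal.ofReal_lt_top)]
  exact integral_congr_ae
    ((toReal_ofReal_ae_eq_restrict hD hpX).mono fun x hx => by simp only [hx])

lemma integrable_deployLaw_iff (hD : MeasurableSet D) (hpXmeas : Measurable pX)
    (hpX : ∀ x ∈ D, 0 ≤ pX x) {F : E → G} :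
    Integrable F (deployLaw D pX) ↔ Integrable (fun x => pX x • F x) (volume.restrict D) := by
  rw [deployLaw, integrable_withDensity_iff_integrable_smul' hpXmeas.ennreal_ofReal
    (.of_forall fun _ => ENNReal.ofReal_lt_top)]
  exact integrable_congr
    ((toReal_ofReal_ae_eq_restrict hD hpX).mono fun x hx => by simp only [hx])

end DeployLaw

noncomputable def sensorTerm {E : Type*} (c : ℝ) (pX : E → ℝ) (ψ : E → ℂ) (f : E → ℝ)
    (q : E × ℝ × ℝ) : ℂ :=
  c * starRingEnd ℂ (ψ q.1) / pX q.1 * sgn' (f q.1 + q.2.1 - q.2.2)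

lemma alphaHat_eq_mean_sensorTerm {E Ω : Type*} (c : ℝ) (pX : E → ℝ) (φ : ℕ → E → ℂ)
    (f : E → ℝ) (X : ℕ → Ω → E) (Z T : ℕ → Ω → ℝ) (n j : ℕ) (ω : Ω) :
    alphaHat c pX φ f X Z T n j ω
      = (n : ℂ)⁻¹ * ∑ i ∈ Finset.range n, sensorTerm c pX (φ j) f (X i ω, Z i ω, T i ω) := by
  simp only [alphaHat, sensorTerm, obsB, Finset.mul_sum]
  refine Finset.sum_congr rfl fun i _ => ?_
  ring

lemma measurable_sensorTerm {E : Type*} [MeasurableSpace E] {c : ℝ} {pX : E → ℝ}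
    {ψ : E → ℂ} {f : E → ℝ} (hpX : Measurable pX) (hψ : Measurable ψ) (hf : Measurable f) :
    Measurable (sensorTerm c pX ψ f) :=
  ((measurable_const.mul
    (Complex.continuous_conj.measurable.comp (hψ.comp measurable_fst))).div
      (Complex.measurable_ofReal.comp (hpX.comp measurable_fst))).mul
    (Complex.measurable_ofReal.comp (measurable_sgn'.comp (by fun_prop)))

lemma norm_sensorTerm_sq {E : Type*} (c : ℝ) (pX : E → ℝ) (ψ : E → ℂ) (f : E → ℝ)
    (q : E × ℝ × ℝ) : ‖sensorTerm c pX ψ f q‖ ^ 2 = c ^ 2 * ‖ψ q.1‖ ^ 2 / pX q.1 ^ 2 := by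
  simp only [sensorTerm, norm_mul, norm_div, Complex.norm_real, RCLike.norm_conj,
    Real.norm_eq_abs, abs_sgn', mul_one, div_pow, mul_pow, sq_abs]

section SensorTerm

variable {E : Type*} [MeasureSpace E] {D : Set E}
  {pX : E → ℝ} {ψ : E → ℂ} {f : E → ℝ} {c : ℝ}

lemma memLp_sensorTerm (hD : MeasurableSet D) (hpXmeas : Measurable pX)
    (hpX : ∀ x ∈ D, 0 < pX x) (hψ : Measurable ψ) (hf : Measurable f)
    (hint : Integrable (fun x => ‖ψ x‖ ^ 2 / pX x) (volume.restrict D))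
    (ρ : Measure (ℝ × ℝ)) [IsFiniteMeasure ρ] :
    MemLp (sensorTerm c pX ψ f) 2 ((deployLaw D pX).prod ρ) := by
  rw [memLp_two_iff_integrable_sq_norm
    (measurable_sensorTerm hpXmeas hψ hf).aestronglyMeasurable]
  simp only [norm_sensorTerm_sq]
  refine Integrable.comp_fst (f := fun x : E => c ^ 2 * ‖ψ x‖ ^ 2 / pX x ^ 2) ?_ ρ
  rw [integrable_deployLaw_iff hD hpXmeas fun x hx => (hpX x hx).le]
  refine (hint.const_mul (c ^ 2)).congr (ae_restrict_of_forall_mem hD fun x hx => ?_)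
  have := (hpX x hx).ne'
  simp only [smul_eq_mul]
  field_simp

lemma integral_norm_sq_sensorTerm [SFinite (volume : Measure E)] (hD : MeasurableSet D)
    (hpXmeas : Measurable pX) (hpX : ∀ x ∈ D, 0 < pX x) (ρ : Measure (ℝ × ℝ))
    [IsProbabilityMeasure ρ] :
    ∫ q, ‖sensorTerm c pX ψ f q‖ ^ 2 ∂((deployLaw D pX).prod ρ)
      = c ^ 2 * ∫ x in D, ‖ψ x‖ ^ 2 / pX x := by
  simp only [norm_sensorTerm_sq]
  rw [integral_fun_fst (fun x : E => c ^ 2 * ‖ψ x‖ ^ 2 / pX x ^ 2), probReal_univ, one_smul,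
    integral_deployLaw hD hpXmeas fun x hx => (hpX x hx).le, ← integral_const_mul]
  refine setIntegral_congr_fun hD fun x hx => ?_
  have := (hpX x hx).ne'
  simp only [smul_eq_mul]
  field_simp

lemma integral_sensorTerm [SFinite (volume : Measure E)] {a b : ℝ} (hb : 0 < b)
    (hc : c = a + b) {μZ : Measure ℝ} [IsProbabilityMeasure μZ] (hZmean : ∫ z, z ∂μZ = 0)
    (hZsupp : μZ (Set.Icc (-b) b)ᶜ = 0)
    (hD : MeasurableSet D) (hpXmeas : Measurable pX) (hpX : ∀ x ∈ D, 0 < pX x)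
    (hfbd : ∀ x ∈ D, f x ∈ Set.Icc (-a) a)
    (hint : Integrable (sensorTerm c pX ψ f) ((deployLaw D pX).prod (μZ.prod (threshLaw c)))) :
    ∫ q, sensorTerm c pX ψ f q ∂((deployLaw D pX).prod (μZ.prod (threshLaw c)))
      = ∫ x in D, (f x : ℂ) * starRingEnd ℂ (ψ x) := by
  rw [integral_prod _ hint, integral_deployLaw hD hpXmeas fun x hx => (hpX x hx).le]
  refine setIntegral_congr_fun hD fun x hx => ?_
  have hinner : ∫ w : ℝ × ℝ, (sgn' (f x + w.1 - w.2) : ℂ) ∂(μZ.prod (threshLaw c))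
      = (f x / c : ℝ) := by
    rw [integral_complex_ofReal,
      integral_sgn'_add_sub_prod_threshLaw hb hc hZmean hZsupp (hfbd x hx)]
  have hc0 : (c : ℂ) ≠ 0 := by
    have := hfbd x hx
    exact_mod_cast (show c ≠ 0 by linarith [this.1, this.2])
  have hpc : (pX x : ℂ) ≠ 0 := by exact_mod_cast (hpX x hx).ne'
  simp only [sensorTerm, integral_const_mul, hinner, Complex.real_smul]
  push_cast
  field_simp

end SensorTerm

theorem stmt2_general
    {d : ℕ} {D : Set (Fin d → ℝ)} (hDcomp : IsCompact D)
    {a b c : ℝ} (ha : 0 < a) (hb : 0 < b) (hc : c = a + b)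
    {f : (Fin d → ℝ) → ℝ} (hfmeas : Measurable f)
    (hfbd : ∀ x ∈ D, f x ∈ Set.Icc (-a) a)
    {pX : (Fin d → ℝ) → ℝ} (hpXmeas : Measurable pX)
    (hpXpos : ∀ x ∈ D, 0 < pX x) (hpXone : (∫ x in D, pX x) = 1)
    {φ : ℕ → (Fin d → ℝ) → ℂ} (hφmeas : ∀ j, Measurable (φ j))
    {Ω : Type*} [MeasurableSpace Ω] (P : Measure Ω) [IsProbabilityMeasure P]
    (X : ℕ → Ω → (Fin d → ℝ)) (Z T : ℕ → Ω → ℝ)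
    (hXmeas : ∀ i, Measurable (X i)) (hZmeas : ∀ i, Measurable (Z i))
    (hTmeas : ∀ i, Measurable (T i))
    (μZ : Measure ℝ) [IsProbabilityMeasure μZ]
    (hZmean : (∫ z, z ∂μZ) = 0) (hZsupp : μZ (Set.Icc (-b) b)ᶜ = 0)
    (hlaw : ∀ i, Measure.map (fun ω => (X i ω, Z i ω, T i ω)) P =
      (deployLaw D pX).prod (μZ.prod (threshLaw c)))
    (hiid : iIndepFun (fun i ω => (X i ω, Z i ω, T i ω)) P)
    (hInt : ∀ j, Integrable (fun x => ‖φ j x‖ ^ 2 / pX x) (volume.restrict D))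
    (n : ℕ) (hn : 0 < n) :
    ∀ j : ℕ, (∫ ω, ‖alphaHat c pX φ f X Z T n j ω - coeff D f φ j‖ ^ 2 ∂P)
      ≤ c ^ 2 / n * ∫ x in D, ‖φ j x‖ ^ 2 / pX x := by
  intro j
  have hD : MeasurableSet D := hDcomp.measurableSet
  have := isProbabilityMeasure_deployLaw hD (fun x hx => (hpXpos x hx).le) hpXone
  have := isProbabilityMeasure_threshLaw (c := c) (by linarith)
  have hg := memLp_sensorTerm (c := c) hD hpXmeas hpXpos (hφmeas j) hfmeas (hInt j)
    (μZ.prod (threshLaw c))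
  have hW : ∀ i, Measurable fun ω => (X i ω, Z i ω, T i ω) := fun i =>
    (hXmeas i).prodMk ((hZmeas i).prodMk (hTmeas i))
  rw [coeff, ← integral_sensorTerm hb hc hZmean hZsupp hD hpXmeas hpXpos hfbd
    (hg.integrable one_le_two)]
  simp only [alphaHat_eq_mean_sensorTerm]
  calc _ ≤ (∫ q, ‖sensorTerm c pX (φ j) f q‖ ^ 2
            ∂((deployLaw D pX).prod (μZ.prod (threshLaw c)))) / n :=
        integral_norm_sq_sampleMean_sub_le hW hiid hlaw
          (measurable_sensorTerm hpXmeas (hφmeas j) hfmeas) hg hn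
    _ = c ^ 2 / n * ∫ x in D, ‖φ j x‖ ^ 2 / pX x := by
        rw [integral_norm_sq_sensorTerm hD hpXmeas hpXpos]
        ring

/-- **Variance bound for the coefficient estimates.**
`E[|α̂_j − α_j|²] ≤ (c²/n) ∫_D |φ_j|²/p_X`. -/
theorem stmt2
    {d : ℕ} {D : Set (Fin d → ℝ)} (hDcomp : IsCompact D)
    (hDpos : 0 < volume D) (hDfin : volume D < ⊤)
    {a b c : ℝ} (ha : 0 < a) (hb : 0 < b) (hc : c = a + b)
    {f : (Fin d → ℝ) → ℝ} (hfmeas : Measurable f)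
    (hfbd : ∀ x ∈ D, f x ∈ Set.Icc (-a) a)
    {pX : (Fin d → ℝ) → ℝ} (hpXmeas : Measurable pX)
    (hpXpos : ∀ x ∈ D, 0 < pX x) (hpXone : (∫ x in D, pX x) = 1)
    {φ : ℕ → (Fin d → ℝ) → ℂ} (hφmeas : ∀ j, Measurable (φ j))
    (hφL2 : ∀ j, MemLp (φ j) 2 (volume.restrict D))
    (hON : ∀ j k, (∫ x in D, φ j x * (starRingEnd ℂ) (φ k x)) = if j = k then 1 else 0)
    (hComplete : ∀ g : (Fin d → ℝ) → ℂ, Measurable g → MemLp g 2 (volume.restrict D) →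
      (∑' j : ℕ, ‖∫ x in D, g x * (starRingEnd ℂ) (φ j x)‖ ^ 2) = ∫ x in D, ‖g x‖ ^ 2)
    {Ω : Type*} [MeasurableSpace Ω] (P : Measure Ω) [IsProbabilityMeasure P]
    (X : ℕ → Ω → (Fin d → ℝ)) (Z T : ℕ → Ω → ℝ)
    (hXmeas : ∀ i, Measurable (X i)) (hZmeas : ∀ i, Measurable (Z i))
    (hTmeas : ∀ i, Measurable (T i))
    (μZ : Measure ℝ) [IsProbabilityMeasure μZ]
    (hZmean : (∫ z, z ∂μZ) = 0) (hZsupp : μZ (Set.Icc (-b) b)ᶜ = 0)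
    (hlaw : ∀ i, Measure.map (fun ω => (X i ω, Z i ω, T i ω)) P =
      (deployLaw D pX).prod (μZ.prod (threshLaw c)))
    (hiid : iIndepFun (fun i ω => (X i ω, Z i ω, T i ω)) P)
    (hInt : ∀ j, Integrable (fun x => ‖φ j x‖ ^ 2 / pX x) (volume.restrict D))
    (n : ℕ) (hn : 0 < n) :
    ∀ j : ℕ, (∫ ω, ‖alphaHat c pX φ f X Z T n j ω - coeff D f φ j‖ ^ 2 ∂P)
      ≤ c ^ 2 / n * ∫ x in D, ‖φ j x‖ ^ 2 / pX x :=
  stmt2_general hDcomp ha hb hc hfmeas hfbd hpXmeas hpXpos hpXone hφmeas P X Z T hXmeas hZmeas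
    hTmeas μZ hZmean hZsupp hlaw hiid hInt n hn
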